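/- arXiv:1303.0930 — 2 statements merged into one kernel-verified Lean document; each statement's English description precedes it below -/
import Mathlib

section
/- Let F be a finite field, D an m×p matrix over F and G' a k×r matrix over F. Let v ∈ F^p be a row vector not in the row space of D and w ∈ F^k a column vector not in the column space of G'. Fix C0 ∈ F^{m×k} and B0 ∈ F^{p×r}, and suppose the solution set S = {A ∈ F^{p×k} : D·A = C0 and A·G' = B0} is nonempty. Then for every y ∈ F, the number of A ∈ S with v·A·w = y equals |S|/|F|; in particular all values in F are attained equally often. -/
/-!
Since `v` is not in the row space of `D`, some `x` has `D x = 0` and `v ⬝ x = 1`; likewise some `z`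
has `G'ᵀ z = 0` and `w ⬝ z = 1`. The rank-one matrix `A₀ = x zᵀ` then satisfies `D A₀ = 0`,
`A₀ G' = 0` and `v A₀ w = 1`, so `A ↦ A + c A₀` preserves the solution set and shifts the label
by `c`. This makes the solution set the product of any one fiber with `F`.
-/

open Matrix

theorem Matrix.exists_mulVec_eq_zero_dotProduct_eq_one {ι n K : Type*} [Field K] [Fintype n]
    [DecidableEq n] (M : Matrix ι n K) {v : n → K}
    (hv : v ∉ Submodule.span K (Set.range fun i => M i)) :
    ∃ x : n → K, M *ᵥ x = 0 ∧ v ⬝ᵥ x = 1 := by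
  obtain ⟨f, hfv, hf⟩ := Submodule.exists_dual_map_eq_bot_of_notMem hv inferInstance
  have hf_apply (u : n → K) : f u = u ⬝ᵥ (dotProductEquiv K n).symm f := by
    conv_lhs => rw [← (dotProductEquiv K n).apply_symm_apply f]
    exact dotProduct_comm _ _
  refine ⟨(f v)⁻¹ • (dotProductEquiv K n).symm f, funext fun i => ?_, ?_⟩
  · have : f (M i) = 0 := by
      rw [← Submodule.mem_bot K, ← hf]
      exact Submodule.mem_map_of_mem (Submodule.subset_span ⟨i, rfl⟩)
    simp [mulVec, dotProduct_smul, ← hf_apply, this]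
  · rw [dotProduct_smul, ← hf_apply, smul_eq_mul, inv_mul_cancel₀ hfv]

theorem Nat.card_fiber_mul_card_eq_of_add_smul {K M : Type*} [Ring K] [Fintype K]
    [AddCommGroup M] [Module K M] {P : M → Prop} {f : M → K} {a₀ : M}
    (hP : ∀ a (c : K), P a → P (a + c • a₀)) (hf : ∀ a (c : K), f (a + c • a₀) = f a + c)
    (y : K) : Nat.card {a // P a ∧ f a = y} * Fintype.card K = Nat.card {a // P a} := by
  let e : {a // P a} ≃ {a // P a ∧ f a = y} × K :=
    { toFun a := (⟨a - (f a - y) • a₀, by rw [sub_eq_add_neg, ← neg_smul]; exact hP _ _ a.2,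
        by rw [sub_eq_add_neg, ← neg_smul, hf]; abel⟩, f a - y)
      invFun b := ⟨b.1 + b.2 • a₀, hP _ _ b.1.2.1⟩
      left_inv a := by simp
      right_inv := by
        rintro ⟨⟨b, _, rfl⟩, c⟩
        simp [hf] }
  rw [Nat.card_congr e, Nat.card_prod, Nat.card_eq_fintype_card (α := K)]

theorem stmt_4_general {m p k r : ℕ} {F : Type*} [Field F] [Fintype F]
    (D : Matrix (Fin m) (Fin p) F) (G' : Matrix (Fin k) (Fin r) F)
    (v : Fin p → F) (hv : v ∉ Submodule.span F (Set.range fun i : Fin m => D i))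
    (w : Fin k → F)
    (hw : w ∉ Submodule.span F (Set.range fun j : Fin r => G'.transpose j))
    (C0 : Matrix (Fin m) (Fin k) F) (B0 : Matrix (Fin p) (Fin r) F) :
    ∀ y : F,
      Nat.card {A : Matrix (Fin p) (Fin k) F //
          (D * A = C0 ∧ A * G' = B0) ∧ dotProduct v (A.mulVec w) = y}
        * Fintype.card F
      = Nat.card {A : Matrix (Fin p) (Fin k) F // D * A = C0 ∧ A * G' = B0} := by
  obtain ⟨x, hDx, hvx⟩ := D.exists_mulVec_eq_zero_dotProduct_eq_one hv
  obtain ⟨z, hGz, hwz⟩ := G'.transpose.exists_mulVec_eq_zero_dotProduct_eq_one hw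
  have hDA₀ : D * vecMulVec x z = 0 := by simp [mul_vecMulVec, hDx]
  have hA₀G : vecMulVec x z * G' = 0 := by
    rw [vecMulVec_mul, ← mulVec_transpose, hGz]
    ext
    simp [vecMulVec_apply]
  have hA₀ : v ⬝ᵥ vecMulVec x z *ᵥ w = 1 := by
    simp [vecMulVec_mulVec, dotProduct_comm z w, hwz, hvx]
  refine Nat.card_fiber_mul_card_eq_of_add_smul (a₀ := vecMulVec x z) ?_ fun A c => ?_
  · rintro A c ⟨hDA, hAG⟩
    simp [Matrix.mul_add, Matrix.add_mul, hDA₀, hA₀G, hDA, hAG]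
  · rw [add_mulVec, dotProduct_add, smul_mulVec, dotProduct_smul, hA₀, smul_eq_mul, mul_one]

/-- over a finite field `F`, if `v` is not in the row space of `D`,
`w` is not in the column space of `G'`, and the solution set
`S = {A : D·A = C0, A·G' = B0}` is nonempty, then for every `y ∈ F` the number
of `A ∈ S` with `v·A·w = y` equals `|S|/|F|` (stated multiplicatively:
`#fiber · |F| = |S|`), so all values of `F` are attained equally often. -/
theorem stmt_4 {m p k r : ℕ} {F : Type*} [Field F] [Fintype F]
    (D : Matrix (Fin m) (Fin p) F) (G' : Matrix (Fin k) (Fin r) F)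
    (v : Fin p → F) (hv : v ∉ Submodule.span F (Set.range fun i : Fin m => D i))
    (w : Fin k → F)
    (hw : w ∉ Submodule.span F (Set.range fun j : Fin r => G'.transpose j))
    (C0 : Matrix (Fin m) (Fin k) F) (B0 : Matrix (Fin p) (Fin r) F)
    (hne : ∃ A : Matrix (Fin p) (Fin k) F, D * A = C0 ∧ A * G' = B0) :
    ∀ y : F,
      Nat.card {A : Matrix (Fin p) (Fin k) F //
          (D * A = C0 ∧ A * G' = B0) ∧ dotProduct v (A.mulVec w) = y}
        * Fintype.card F
      = Nat.card {A : Matrix (Fin p) (Fin k) F // D * A = C0 ∧ A * G' = B0} :=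
  stmt_4_general D G' v hv w hw C0 B0
end

section
/- Let C ⊆ F^V be a linear code over a field F with generator matrix G, fix i ∈ {1,…,V} and let B ⊆ {1,…,V}\{i}. Then the i-th column g_i of G does NOT lie in the F-span of the columns {g_j : j ∈ B} if and only if B ∪ {i} does not contain the support of any codeword of C⊥ that is minimal with respect to i. -/
/-- The dual code of a code `C ⊆ F^V`. -/
def dualCode {V : ℕ} {F : Type*} [Field F] (C : Set (Fin V → F)) : Set (Fin V → F) :=
  {x | ∀ c ∈ C, dotProduct x c = 0}

/-- A codeword `x` of a code `S` is minimal with respect to the coordinate `i` if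
`x_i = 1` and no other codeword of `S` with `i`-th component `1` has support
strictly contained in that of `x`. -/
def IsMinimalWrt {V : ℕ} {F : Type*} [Field F] (S : Set (Fin V → F)) (i : Fin V)
    (x : Fin V → F) : Prop :=
  x ∈ S ∧ x i = 1 ∧
    ∀ x' ∈ S, x' i = 1 → ¬ Function.support x' ⊂ Function.support x

/-! A dual codeword `x` with `x i = 1` and support in `B ∪ {i}` is the same thing as a linear
relation `g_i = -∑_{j ∈ B} x_j g_j` among the columns of `G`, because `x ∈ C⊥` iff `G x = 0`.
Among such codewords one whose support is minimal under inclusion (supports form a well-founded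
order, `V` being finite) is minimal with respect to `i`. -/

open Function Submodule

theorem support_single_sub_subset_iff {ι G : Type*} [DecidableEq ι] [AddGroup G] {i : ι} {a : G}
    {x : ι → G} {B : Set ι} (hi : i ∉ B) :
    support (Pi.single i a - x) ⊆ B ↔ x i = a ∧ support x ⊆ B ∪ {i} := by
  simp only [support_subset_iff', Set.mem_union, Set.mem_singleton_iff, not_or]
  constructor
  · intro h
    refine ⟨?_, fun j ⟨hjB, hji⟩ => ?_⟩
    · simpa [sub_eq_zero, eq_comm] using h i hi
    · simpa [hji] using h j hjB
  · rintro ⟨hxi, hx⟩ j hjB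
    by_cases hji : j = i
    · simp [hji, hxi]
    · simp [hji, hx j ⟨hjB, hji⟩]

section LinearDependence

variable {ι R M : Type*} [Fintype ι] [Ring R] [AddCommGroup M] [Module R M]

theorem mem_span_image_iff_exists_support_subset {v : ι → M} {s : Set ι} {x : M} :
    x ∈ span R (v '' s) ↔
      ∃ c : ι → R, support c ⊆ s ∧ Fintype.linearCombination R v c = x := by
  rw [Finsupp.mem_span_image_iff_linearCombination,
    (Finsupp.linearEquivFunOnFinite R R ι).symm.surjective.exists]
  simp only [Finsupp.mem_supported, Finsupp.linearCombination_eq_fintype_linearCombination_apply,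
    ← Finsupp.fun_support_eq, Finsupp.linearEquivFunOnFinite_symm_apply]

theorem mem_span_image_iff_exists_dependence [DecidableEq ι] (v : ι → M) {i : ι} {B : Set ι}
    (hi : i ∉ B) :
    v i ∈ span R (v '' B) ↔
      ∃ x : ι → R, Fintype.linearCombination R v x = 0 ∧ x i = 1 ∧ support x ⊆ B ∪ {i} := by
  rw [mem_span_image_iff_exists_support_subset,
    (Equiv.subLeft (Pi.single i 1 : ι → R)).surjective.exists]
  refine exists_congr fun x => ?_
  rw [Equiv.subLeft_apply, support_single_sub_subset_iff hi, map_sub,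
    Fintype.linearCombination_apply_single, one_smul, sub_eq_self]
  tauto

end LinearDependence

section DualCode

variable {V : ℕ} {F : Type*} [Field F]

theorem dualCode_span (S : Set (Fin V → F)) :
    dualCode (span F S : Set (Fin V → F)) = dualCode S := by
  ext x
  refine ⟨fun h c hc => h c (subset_span hc), fun h c hc => ?_⟩
  have hker : span F S ≤ LinearMap.ker (dotProductBilin F F x) := span_le.2 h
  exact hker hc

theorem mem_dualCode_span_rows_iff {k : ℕ} (G : Matrix (Fin k) (Fin V) F) (x : Fin V → F) :
    x ∈ dualCode (span F (Set.range fun t => G t) : Set (Fin V → F)) ↔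
      Fintype.linearCombination F (fun j t => G t j) x = 0 := by
  rw [dualCode_span]
  simp only [dualCode, Set.mem_ofPred_eq, Set.forall_mem_range, funext_iff,
    Fintype.linearCombination_apply, Finset.sum_apply, Pi.smul_apply, smul_eq_mul, Pi.zero_apply,
    dotProduct, mul_comm]

theorem exists_isMinimalWrt_of_support_subset {S : Set (Fin V → F)} {i : Fin V}
    {T : Set (Fin V)} {x : Fin V → F} (hxS : x ∈ S) (hxi : x i = 1) (hxT : support x ⊆ T) :
    ∃ y, IsMinimalWrt S i y ∧ support y ⊆ T := by
  obtain ⟨y, ⟨hyS, hyi, hyT⟩, hmin⟩ := (InvImage.wf support wellFounded_lt).has_min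
    {y | y ∈ S ∧ y i = 1 ∧ support y ⊆ T} ⟨x, hxS, hxi, hxT⟩
  exact ⟨y, ⟨hyS, hyi, fun y' hy'S hy'i hlt => hmin y' ⟨hy'S, hy'i, hlt.subset.trans hyT⟩ hlt⟩, hyT⟩

end DualCode

theorem stmt_8_general {V k : ℕ} {F : Type*} [Field F]
    (C : Submodule F (Fin V → F)) (G : Matrix (Fin k) (Fin V) F)
    (hGspan : Submodule.span F (Set.range fun t : Fin k => G t) = C)
    (i : Fin V) (B : Set (Fin V)) (hi : i ∉ B) :
    (fun t : Fin k => G t i) ∉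
        Submodule.span F ((fun j : Fin V => fun t : Fin k => G t j) '' B) ↔
      ¬ ∃ x : Fin V → F, IsMinimalWrt (dualCode (C : Set (Fin V → F))) i x ∧
          Function.support x ⊆ B ∪ {i} := by
  rw [not_iff_not, mem_span_image_iff_exists_dependence _ hi]
  subst hGspan
  constructor
  · rintro ⟨x, hx, hxi, hxB⟩
    exact exists_isMinimalWrt_of_support_subset ((mem_dualCode_span_rows_iff G x).2 hx) hxi hxB
  · rintro ⟨x, ⟨hx, hxi, -⟩, hxB⟩
    exact ⟨x, (mem_dualCode_span_rows_iff G x).1 hx, hxi, hxB⟩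

/-- `g_i` does NOT lie in the span of the columns `{g_j : j ∈ B}` iff
`B ∪ {i}` contains no support of a codeword of `C^⊥` minimal with respect to `i`. -/
theorem stmt_8 {V k : ℕ} {F : Type*} [Field F]
    (C : Submodule F (Fin V → F)) (G : Matrix (Fin k) (Fin V) F)
    (hGind : LinearIndependent F (fun t : Fin k => G t))
    (hGspan : Submodule.span F (Set.range fun t : Fin k => G t) = C)
    (i : Fin V) (B : Set (Fin V)) (hi : i ∉ B) :
    (fun t : Fin k => G t i) ∉
        Submodule.span F ((fun j : Fin V => fun t : Fin k => G t j) '' B) ↔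
      ¬ ∃ x : Fin V → F, IsMinimalWrt (dualCode (C : Set (Fin V → F))) i x ∧
          Function.support x ⊆ B ∪ {i} :=
  stmt_8_general C G hGspan i B hi
end
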